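/- Let N ≥ 3. Assume lim_{s→∞} f'(s)F(s) = q and lim_{s→∞} f'(s)²/(f(s)f''(s)) = q with q > 1. Then there exists C > 0, depending only on N and q, such that for any functions η₁, η₂ : [ρ₀,∞) → ℝ with ηᵢ(ρ) → 0 as ρ → ∞ (i = 1,2) there exists ρ₁ ≥ ρ₀ such that |N[η₁](ρ) − N[η₂](ρ)| ≤ C·(|η₁(ρ)| + |η₂(ρ)|)·|η₁(ρ) − η₂(ρ)| for all ρ ≥ ρ₁. -/

import Mathlib

/-!
Put `s = φ(ρ)`. Then `N[η₁] − N[η₂]` is `(2N − 4q) F(s)/s` times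
`f y − f x − f'(s)(y − x)` with `x, y = s(1 + ηᵢ)`, so two applications of the mean value
theorem bound it by
`|2N − 4q| · F(s) s · sup_{[s/2, 2s]} f'' · (|η₁| + |η₂|) |η₁ − η₂|`.
The limit hypotheses control `f''` on the window `[s/2, 2s]`: as `(f F)' = f' F − 1 → q − 1`,
`f F` grows linearly, so `s f' ≤ M f` with `M = 4(q + 1)/(q − 1)`; together with `f f'' < f'²`
this gives `s f'' ≤ M f'`. Hence `f'/s^M` decreases, `f'` grows at most by `2^M` across the
window, and `f'' ≤ 2^(M+1) M f'(s)/s` there. Finally `f'(s) F(s) ≤ q + 1`.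
-/

open Set Filter MeasureTheory Topology

theorem hasDerivAt_integral_Ioi {g : ℝ → ℝ} {a s : ℝ} (has : a < s)
    (hg : IntegrableOn g (Ioi a)) (hgs : ContinuousAt g s) :
    HasDerivAt (fun u => ∫ t in Ioi u, g t) (-g s) s := by
  have hint : HasDerivAt (fun u => ∫ t in a..u, g t) (g s) s :=
    intervalIntegral.integral_hasDerivAt_right
      ((intervalIntegrable_iff_integrableOn_Ioc_of_le has.le).mpr
        (hg.mono_set Ioc_subset_Ioi_self))
      (AEStronglyMeasurable.stronglyMeasurableAtFilter_of_mem hg.aestronglyMeasurable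
        (Ioi_mem_nhds has)) hgs
  refine (hint.const_sub (∫ t in Ioi a, g t)).congr_of_eventuallyEq ?_
  filter_upwards [Ioi_mem_nhds has] with u hu
  rw [← intervalIntegral.integral_Ioi_sub_Ioi hg (le_of_lt hu), sub_sub_cancel]

theorem eventually_mul_le_of_le_deriv {G G' : ℝ → ℝ} {c : ℝ} (hc : 0 ≤ c)
    (hG : ∀ᶠ t in atTop, HasDerivAt G (G' t) t ∧ c ≤ G' t ∧ 0 ≤ G t) :
    ∀ᶠ t in atTop, c / 2 * t ≤ G t := by
  obtain ⟨a, ha⟩ := eventually_atTop.mp (hG.and (eventually_gt_atTop 0))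
  have hgrowth := (convex_Ici a).mul_sub_le_image_sub_of_le_deriv (f := G) (C := c)
    (fun t ht => (ha t ht).1.1.continuousAt.continuousWithinAt)
    (fun t ht => (ha t (interior_subset ht)).1.1.differentiableAt.differentiableWithinAt)
    (fun t ht => (ha t (interior_subset ht)).1.1.deriv ▸ (ha t (interior_subset ht)).1.2.1)
  obtain ⟨⟨-, -, hGa⟩, ha0⟩ := ha a le_rfl
  filter_upwards [eventually_ge_atTop (2 * a)] with t ht
  have := hgrowth a self_mem_Ici t (mem_Ici.mpr (by linarith)) (by linarith)
  nlinarith [mul_nonneg hc (show 0 ≤ t - 2 * a by linarith)]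

theorem eventually_le_two_rpow_mul {g g' : ℝ → ℝ} {p : ℝ}
    (hg : ∀ᶠ t in atTop, HasDerivAt g (g' t) t ∧ t * g' t ≤ p * g t) :
    ∀ᶠ s in atTop, g (2 * s) ≤ 2 ^ p * g s := by
  obtain ⟨a, ha⟩ := eventually_atTop.mp (hg.and (eventually_gt_atTop 0))
  have hquot : ∀ t ≥ a, HasDerivAt (fun t => g t / t ^ p)
      ((g' t * t ^ p - g t * (p * t ^ (p - 1))) / (t ^ p) ^ 2) t := fun t ht =>
    (ha t ht).1.1.div (Real.hasDerivAt_rpow_const (Or.inl (ha t ht).2.ne'))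
      (Real.rpow_pos_of_pos (ha t ht).2 p).ne'
  have hanti : AntitoneOn (fun t => g t / t ^ p) (Ici a) := by
    refine antitoneOn_of_hasDerivWithinAt_nonpos (convex_Ici a)
      (fun t ht => (hquot t ht).continuousAt.continuousWithinAt)
      (fun t ht => (hquot t (interior_subset ht)).hasDerivWithinAt) (fun t ht => ?_)
    obtain ⟨⟨-, hle⟩, ht0⟩ := ha t (interior_subset ht)
    have hsplit : t ^ p = t ^ (p - 1) * t := by
      rw [← Real.rpow_add_one ht0.ne', sub_add_cancel]
    refine div_nonpos_of_nonpos_of_nonneg ?_ (sq_nonneg _)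
    rw [hsplit]
    nlinarith [Real.rpow_pos_of_pos ht0 (p - 1)]
  filter_upwards [eventually_ge_atTop a] with s hs
  have hs0 : 0 < s := (ha a le_rfl).2.trans_le hs
  have h : g (2 * s) / (2 * s) ^ p ≤ g s / s ^ p :=
    hanti (mem_Ici.mpr hs) (mem_Ici.mpr (by linarith)) (by linarith)
  rw [Real.mul_rpow zero_le_two hs0.le, div_le_div_iff₀ (by positivity) (by positivity)] at h
  nlinarith [Real.rpow_pos_of_pos hs0 p]

theorem Filter.Eventually.forall_Icc_half_two {P : ℝ → Prop} (h : ∀ᶠ t in atTop, P t) :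
    ∀ᶠ s in atTop, ∀ t ∈ Icc (s / 2) (2 * s), P t := by
  obtain ⟨a, ha⟩ := eventually_atTop.mp h
  filter_upwards [eventually_ge_atTop (2 * a)] with s hs t ht
  exact ha t (by linarith [ht.1])

theorem abs_sub_sub_deriv_mul_le {f f' f'' : ℝ → ℝ} {s r B x y : ℝ}
    (hf : ∀ t ∈ Icc (s - r) (s + r), HasDerivAt f (f' t) t)
    (hf' : ∀ t ∈ Icc (s - r) (s + r), HasDerivAt f' (f'' t) t)
    (hB : ∀ t ∈ Icc (s - r) (s + r), |f'' t| ≤ B)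
    (hx : |x - s| ≤ r) (hy : |y - s| ≤ r) :
    |f y - f x - f' s * (y - x)| ≤ B * r * |y - x| := by
  have mem : ∀ {t}, |t - s| ≤ r → t ∈ Icc (s - r) (s + r) := fun ht => by
    constructor <;> linarith [abs_le.mp ht]
  have hs : s ∈ Icc (s - r) (s + r) := mem (by simpa using (abs_nonneg _).trans hx)
  have hLip : ∀ t ∈ Icc (s - r) (s + r), |f' t - f' s| ≤ B * r := fun t ht => by
    have := (convex_Icc _ _).norm_image_sub_le_of_norm_hasDerivWithin_le
      (fun u hu => (hf' u hu).hasDerivWithinAt) hB hs ht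
    refine this.trans (mul_le_mul_of_nonneg_left ?_ ((abs_nonneg _).trans (hB s hs)))
    exact abs_le.mpr ⟨by linarith [ht.1], by linarith [ht.2]⟩
  have := (convex_Icc _ _).norm_image_sub_le_of_norm_hasDerivWithin_le
    (f := fun t => f t - f' s * t) (f' := fun t => f' t - f' s)
    (fun t ht => ((hf t ht).sub ((hasDerivAt_id t).const_mul (f' s))).hasDerivWithinAt.congr_deriv
      (by simp)) hLip (mem hx) (mem hy)
  simp only [Real.norm_eq_abs] at this
  convert this using 2; ring

noncomputable def growthExponent (q : ℝ) : ℝ := 4 * (q + 1) / (q - 1)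

theorem growthExponent_pos {q : ℝ} (hq : 1 < q) : 0 < growthExponent q :=
  div_pos (by linarith) (by linarith)

theorem eventually_mul_deriv_le_growthExponent_mul {f F : ℝ → ℝ} {q : ℝ} (hq : 1 < q)
    (hfpos : ∀ s, 0 < s → 0 < f s) (hf'pos : ∀ s, 0 < s → 0 < deriv f s)
    (hf : ∀ s, 0 < s → HasDerivAt f (deriv f s) s)
    (hF : ∀ s, 0 < s → HasDerivAt F (-(f s)⁻¹) s)
    (hlim : Tendsto (fun s => deriv f s * F s) atTop (𝓝 q)) :
    ∀ᶠ s in atTop, s * deriv f s ≤ growthExponent q * f s := by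
  have hwindow : ∀ᶠ s in atTop, (q + 1) / 2 < deriv f s * F s ∧ deriv f s * F s < q + 1 :=
    hlim (Ioo_mem_nhds (by linarith) (by linarith))
  have hFpos : ∀ᶠ s in atTop, 0 < s ∧ 0 < F s := by
    filter_upwards [hwindow, eventually_gt_atTop 0] with s hs hs0
    exact ⟨hs0, pos_of_mul_pos_right (by linarith [hs.1]) (hf'pos s hs0).le⟩
  have hlinear : ∀ᶠ s in atTop, (q - 1) / 2 / 2 * s ≤ f s * F s := by
    refine eventually_mul_le_of_le_deriv (G' := fun s => deriv f s * F s - 1) (by linarith) ?_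
    filter_upwards [hwindow, hFpos] with s hs ⟨hs0, hFs⟩
    refine ⟨?_, by linarith [hs.1], (mul_pos (hfpos s hs0) hFs).le⟩
    refine ((hf s hs0).mul (hF s hs0)).congr_deriv ?_
    rw [mul_neg, mul_inv_cancel₀ (hfpos s hs0).ne', sub_eq_add_neg]
  filter_upwards [hwindow, hFpos, hlinear] with s hs ⟨hs0, hFs⟩ hfF
  refine le_of_mul_le_mul_right ?_ hFs
  have hM : growthExponent q * ((q - 1) / 2 / 2 * s) = (q + 1) * s := by
    unfold growthExponent; field_simp [show q - 1 ≠ 0 by linarith]; ring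
  nlinarith [mul_le_mul_of_nonneg_left hfF (growthExponent_pos hq).le]

theorem eventually_deriv2_pos_and_lt {f : ℝ → ℝ} {q : ℝ} (hq : 1 < q)
    (hfpos : ∀ s, 0 < s → 0 < f s)
    (hlim : Tendsto (fun s => deriv f s ^ 2 / (f s * deriv (deriv f) s)) atTop (𝓝 q)) :
    ∀ᶠ s in atTop, 0 < deriv (deriv f) s ∧ f s * deriv (deriv f) s < deriv f s ^ 2 := by
  filter_upwards [hlim.eventually (eventually_gt_nhds hq), eventually_gt_atTop 0] with s hs hs0
  have hden : 0 < f s * deriv (deriv f) s := by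
    by_contra! h
    linarith [div_nonpos_of_nonneg_of_nonpos (sq_nonneg (deriv f s)) h]
  exact ⟨pos_of_mul_pos_right hden (hfpos s hs0).le, (one_lt_div hden).mp hs⟩

theorem eventually_deriv_le_on_Icc_half_two {g g' : ℝ → ℝ} {p : ℝ} (hp : 0 ≤ p)
    (hg : ∀ᶠ t in atTop,
      HasDerivAt g (g' t) t ∧ 0 < g t ∧ 0 ≤ g' t ∧ t * g' t ≤ p * g t) :
    ∀ᶠ s in atTop, ∀ t ∈ Icc (s / 2) (2 * s), g' t ≤ 2 ^ (p + 1) * p * g s / s := by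
  obtain ⟨a, ha⟩ := eventually_atTop.mp (hg.and (eventually_gt_atTop 0))
  have hmono : MonotoneOn g (Ici a) :=
    monotoneOn_of_hasDerivWithinAt_nonneg (convex_Ici a)
      (fun t ht => (ha t ht).1.1.continuousAt.continuousWithinAt)
      (fun t ht => (ha t (interior_subset ht)).1.1.hasDerivWithinAt)
      (fun t ht => (ha t (interior_subset ht)).1.2.2.1)
  have hdouble := eventually_le_two_rpow_mul (hg.mono fun t ht => ⟨ht.1, ht.2.2.2⟩)
  filter_upwards [hdouble, eventually_ge_atTop (2 * a)] with s hdouble hs t ht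
  obtain ⟨⟨-, -, hg't, hratio⟩, ht0⟩ := ha t (by linarith [ht.1])
  have hs0 : 0 < s := by linarith [(ha a le_rfl).2]
  have hgt : g t ≤ g (2 * s) :=
    hmono (mem_Ici.mpr (by linarith [ht.1])) (mem_Ici.mpr (by linarith)) ht.2
  rw [le_div_iff₀ hs0]
  calc g' t * s ≤ 2 * (t * g' t) := by nlinarith [ht.1]
    _ ≤ 2 * (p * g (2 * s)) := by linarith [mul_le_mul_of_nonneg_left hgt hp]
    _ ≤ 2 * (p * (2 ^ p * g s)) := by gcongr
    _ = 2 ^ (p + 1) * p * g s := by rw [Real.rpow_add_one two_ne_zero]; ring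

/-- With `s = φ(ρ)` and `e = η(ρ)`, the paper's `N[η](ρ)` is `(2N − 4q) (F s / s)` times
this. -/
noncomputable def dilationRemainder (f : ℝ → ℝ) (s e : ℝ) : ℝ :=
  f (s * (1 + e)) - f s - deriv f s * s * e

theorem abs_dilationRemainder_sub_le {f : ℝ → ℝ} {s e₁ e₂ B : ℝ} (hs : 0 < s)
    (he : |e₁| + |e₂| ≤ 1 / 2)
    (hf : ∀ t ∈ Icc (s / 2) (2 * s), HasDerivAt f (deriv f t) t)
    (hf' : ∀ t ∈ Icc (s / 2) (2 * s), HasDerivAt (deriv f) (deriv (deriv f) t) t)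
    (hB : ∀ t ∈ Icc (s / 2) (2 * s), |deriv (deriv f) t| ≤ B) :
    |dilationRemainder f s e₁ - dilationRemainder f s e₂| ≤
      B * s ^ 2 * (|e₁| + |e₂|) * |e₁ - e₂| := by
  set r := s * (|e₁| + |e₂|)
  have hwindow : Icc (s - r) (s + r) ⊆ Icc (s / 2) (2 * s) :=
    Icc_subset_Icc (by nlinarith) (by nlinarith [abs_nonneg e₁, abs_nonneg e₂])
  have hdist : ∀ e, |e| ≤ |e₁| + |e₂| → |s * (1 + e) - s| ≤ r := fun e he => by
    rw [show s * (1 + e) - s = s * e by ring, abs_mul, abs_of_pos hs]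
    exact mul_le_mul_of_nonneg_left he hs.le
  have htaylor := abs_sub_sub_deriv_mul_le (fun t ht => hf t (hwindow ht))
    (fun t ht => hf' t (hwindow ht)) (fun t ht => hB t (hwindow ht))
    (hdist e₂ (le_add_of_nonneg_left (abs_nonneg _)))
    (hdist e₁ (le_add_of_nonneg_right (abs_nonneg _)))
  have hdiff : s * (1 + e₁) - s * (1 + e₂) = s * (e₁ - e₂) := by ring
  calc |dilationRemainder f s e₁ - dilationRemainder f s e₂|
      = |f (s * (1 + e₁)) - f (s * (1 + e₂)) -
          deriv f s * (s * (1 + e₁) - s * (1 + e₂))| := by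
        unfold dilationRemainder; congr 1; ring
    _ ≤ B * r * |s * (1 + e₁) - s * (1 + e₂)| := htaylor
    _ = B * s ^ 2 * (|e₁| + |e₂|) * |e₁ - e₂| := by
        rw [hdiff, abs_mul, abs_of_pos hs]; ring

theorem eventually_abs_mul_dilationRemainder_sub_le (c : ℝ) {f F : ℝ → ℝ} {q : ℝ}
    (hq : 1 < q)
    (hf : ContDiffOn ℝ 2 f (Ioi 0)) (hfpos : ∀ s, 0 < s → 0 < f s)
    (hf'pos : ∀ s, 0 < s → 0 < deriv f s)
    (hFint : ∀ s, 0 < s → IntegrableOn (fun t => (f t)⁻¹) (Ioi s))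
    (hFdef : ∀ s, F s = ∫ t in Ioi s, (f t)⁻¹)
    (hlim₁ : Tendsto (fun s => deriv f s * F s) atTop (𝓝 q))
    (hlim₂ : Tendsto (fun s => deriv f s ^ 2 / (f s * deriv (deriv f) s)) atTop (𝓝 q)) :
    ∀ᶠ s in atTop, ∀ e₁ e₂ : ℝ, |e₁| + |e₂| ≤ 1 / 2 →
      |c * (F s / s) * dilationRemainder f s e₁ - c * (F s / s) * dilationRemainder f s e₂| ≤
        |c| * (2 ^ (growthExponent q + 1) * growthExponent q * (q + 1)) *
          (|e₁| + |e₂|) * |e₁ - e₂| := by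
  set M := growthExponent q
  have hM : 0 < M := growthExponent_pos hq
  have hDf : ∀ s, 0 < s → HasDerivAt f (deriv f s) s := fun s hs =>
    ((hf.differentiableOn two_ne_zero s hs).differentiableAt (isOpen_Ioi.mem_nhds hs)).hasDerivAt
  have hDf' : ∀ s, 0 < s → HasDerivAt (deriv f) (deriv (deriv f) s) s := fun s hs =>
    ((((hf.deriv_of_isOpen isOpen_Ioi (by norm_num)).differentiableOn one_ne_zero) s
      hs).differentiableAt (isOpen_Ioi.mem_nhds hs)).hasDerivAt
  have hDF : ∀ s, 0 < s → HasDerivAt F (-(f s)⁻¹) s := fun s hs => by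
    rw [show F = fun u => ∫ t in Ioi u, (f t)⁻¹ from funext hFdef]
    exact hasDerivAt_integral_Ioi (half_lt_self hs) (hFint _ (half_pos hs))
      ((hDf s hs).continuousAt.inv₀ (hfpos s hs).ne')
  have hconvex := eventually_deriv2_pos_and_lt hq hfpos hlim₂
  have hf''le : ∀ᶠ s in atTop, ∀ t ∈ Icc (s / 2) (2 * s),
      deriv (deriv f) t ≤ 2 ^ (M + 1) * M * deriv f s / s := by
    refine eventually_deriv_le_on_Icc_half_two hM.le ?_
    filter_upwards [eventually_mul_deriv_le_growthExponent_mul hq hfpos hf'pos hDf hDF hlim₁,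
      hconvex, eventually_gt_atTop 0] with t hgrowth ⟨hf''pos, hlt⟩ ht0
    refine ⟨hDf' t ht0, hf'pos t ht0, hf''pos.le, le_of_mul_le_mul_right ?_ (hfpos t ht0)⟩
    nlinarith [mul_le_mul_of_nonneg_right hgrowth (hf'pos t ht0).le]
  filter_upwards [hf''le, hconvex.forall_Icc_half_two, (eventually_gt_atTop 0).forall_Icc_half_two,
    hlim₁.eventually (eventually_gt_nhds (by linarith : (0 : ℝ) < q)),
    hlim₁.eventually (eventually_lt_nhds (lt_add_one q)), eventually_gt_atTop 0]
    with s hf''le hconvex hpos hf'Fpos hf'Flt hs e₁ e₂ he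
  have hFs : 0 < F s := pos_of_mul_pos_right hf'Fpos (hf'pos s hs).le
  have hrem := abs_dilationRemainder_sub_le hs he (fun t ht => hDf t (hpos t ht))
    (fun t ht => hDf' t (hpos t ht))
    (fun t ht => (abs_of_pos (hconvex t ht).1).trans_le (hf''le t ht))
  have hconst : 0 ≤ 2 ^ (M + 1) * M := by positivity
  rw [← mul_sub, abs_mul, abs_mul, abs_div, abs_of_pos hFs, abs_of_pos hs]
  calc |c| * (F s / s) * |dilationRemainder f s e₁ - dilationRemainder f s e₂|
      ≤ |c| * (F s / s) *
          (2 ^ (M + 1) * M * deriv f s / s * s ^ 2 * (|e₁| + |e₂|) * |e₁ - e₂|) := by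
        gcongr
    _ = |c| * (2 ^ (M + 1) * M * (deriv f s * F s)) * (|e₁| + |e₂|) * |e₁ - e₂| := by
        field_simp
    _ ≤ |c| * (2 ^ (M + 1) * M * (q + 1)) * (|e₁| + |e₂|) * |e₁ - e₂| := by
        gcongr

theorem nonlinear_estimate_general (N : ℕ) (q : ℝ) (hq : 1 < q) :
    ∃ C : ℝ, 0 < C ∧
      ∀ f F : ℝ → ℝ,
        ContDiffOn ℝ 2 f (Set.Ioi 0) →
        (∀ s : ℝ, 0 < s → 0 < f s) →
        (∀ s : ℝ, 0 < s → 0 < deriv f s) →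
        (∀ s : ℝ, 0 < s →
          MeasureTheory.IntegrableOn (fun t => (f t)⁻¹) (Set.Ioi s)) →
        (∀ s : ℝ, F s = ∫ t in Set.Ioi s, (f t)⁻¹) →
        Filter.Tendsto (fun s => deriv f s * F s) Filter.atTop (nhds q) →
        Filter.Tendsto (fun s => (deriv f s) ^ 2 / (f s * deriv (deriv f) s))
          Filter.atTop (nhds q) →
        ∀ (ρ₀ : ℝ) (φ : ℝ → ℝ),
          (∀ ρ ∈ Set.Ici ρ₀, 0 < φ ρ) →
          (∀ ρ ∈ Set.Ici ρ₀,
            HasDerivWithinAt φ (2 * f (φ ρ) * F (φ ρ)) (Set.Ici ρ₀) ρ) →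
          Filter.Tendsto φ Filter.atTop Filter.atTop →
          ∀ η₁ η₂ : ℝ → ℝ,
            Filter.Tendsto η₁ Filter.atTop (nhds 0) →
            Filter.Tendsto η₂ Filter.atTop (nhds 0) →
            ∃ ρ₁ : ℝ, ρ₀ ≤ ρ₁ ∧ ∀ ρ ≥ ρ₁,
              |(2 * (N : ℝ) - 4 * q) * (F (φ ρ) / φ ρ) *
                  (f (φ ρ * (1 + η₁ ρ)) - f (φ ρ) - deriv f (φ ρ) * φ ρ * η₁ ρ) -
                (2 * (N : ℝ) - 4 * q) * (F (φ ρ) / φ ρ) *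
                  (f (φ ρ * (1 + η₂ ρ)) - f (φ ρ) - deriv f (φ ρ) * φ ρ * η₂ ρ)| ≤
              C * (|η₁ ρ| + |η₂ ρ|) * |η₁ ρ - η₂ ρ| := by
  set K := 2 ^ (growthExponent q + 1) * growthExponent q * (q + 1)
  have hK : 0 < K := by have := growthExponent_pos hq; positivity
  refine ⟨(|2 * (N : ℝ) - 4 * q| + 1) * K, by positivity, ?_⟩
  intro f F hf hfpos hf'pos hFint hFdef hlim₁ hlim₂ ρ₀ φ _ _ hφ η₁ η₂ hη₁ hη₂
  have hsmall : ∀ᶠ ρ in atTop, |η₁ ρ| + |η₂ ρ| ≤ 1 / 2 := by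
    refine (hη₁.abs.add hη₂.abs).eventually (eventually_le_nhds ?_)
    norm_num
  obtain ⟨ρ₁, hρ₁⟩ := eventually_atTop.mp
    ((hφ.eventually (eventually_abs_mul_dilationRemainder_sub_le (2 * (N : ℝ) - 4 * q) hq hf
      hfpos hf'pos hFint hFdef hlim₁ hlim₂)).and hsmall)
  refine ⟨max ρ₁ ρ₀, le_max_right _ _, fun ρ hρ => ?_⟩
  obtain ⟨hestimate, hη⟩ := hρ₁ ρ (le_of_max_le_left hρ)
  refine (hestimate _ _ hη).trans ?_
  gcongr
  linarith

/-- nonlinear estimate: for `N ≥ 3` and `q > 1` there is a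
constant `C > 0`, depending only on `N` and `q`, such that whenever `f, F, φ`
are as in the context (with both limits equal to `q`) and `η₁, η₂ → 0` at
infinity, one has `|N[η₁](ρ) − N[η₂](ρ)| ≤ C(|η₁(ρ)|+|η₂(ρ)|)|η₁(ρ)−η₂(ρ)|`
for all sufficiently large `ρ`, where
`N[η](ρ) = (2N−4q)·(F(φ)/φ)·(f(φ(1+η)) − f(φ) − f'(φ)φη)`. -/
theorem nonlinear_estimate (N : ℕ) (hN : 3 ≤ N) (q : ℝ) (hq : 1 < q) :
    ∃ C : ℝ, 0 < C ∧
      ∀ f F : ℝ → ℝ,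
        ContDiffOn ℝ 2 f (Set.Ioi 0) →
        (∀ s : ℝ, 0 < s → 0 < f s) →
        (∀ s : ℝ, 0 < s → 0 < deriv f s) →
        (∀ s : ℝ, 0 < s →
          MeasureTheory.IntegrableOn (fun t => (f t)⁻¹) (Set.Ioi s)) →
        (∀ s : ℝ, F s = ∫ t in Set.Ioi s, (f t)⁻¹) →
        Filter.Tendsto (fun s => deriv f s * F s) Filter.atTop (nhds q) →
        Filter.Tendsto (fun s => (deriv f s) ^ 2 / (f s * deriv (deriv f) s))
          Filter.atTop (nhds q) →
        ∀ (ρ₀ : ℝ) (φ : ℝ → ℝ),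
          (∀ ρ ∈ Set.Ici ρ₀, 0 < φ ρ) →
          (∀ ρ ∈ Set.Ici ρ₀,
            HasDerivWithinAt φ (2 * f (φ ρ) * F (φ ρ)) (Set.Ici ρ₀) ρ) →
          Filter.Tendsto φ Filter.atTop Filter.atTop →
          ∀ η₁ η₂ : ℝ → ℝ,
            Filter.Tendsto η₁ Filter.atTop (nhds 0) →
            Filter.Tendsto η₂ Filter.atTop (nhds 0) →
            ∃ ρ₁ : ℝ, ρ₀ ≤ ρ₁ ∧ ∀ ρ ≥ ρ₁,
              |(2 * (N : ℝ) - 4 * q) * (F (φ ρ) / φ ρ) *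
                  (f (φ ρ * (1 + η₁ ρ)) - f (φ ρ) - deriv f (φ ρ) * φ ρ * η₁ ρ) -
                (2 * (N : ℝ) - 4 * q) * (F (φ ρ) / φ ρ) *
                  (f (φ ρ * (1 + η₂ ρ)) - f (φ ρ) - deriv f (φ ρ) * φ ρ * η₂ ρ)| ≤
              C * (|η₁ ρ| + |η₂ ρ|) * |η₁ ρ - η₂ ρ| :=
  nonlinear_estimate_general N q hq
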